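/- arXiv:2410.23752 — 3 statements merged into one kernel-verified Lean document; each statement's English description precedes it below -/
import Mathlib

section
/- Let {η^k, q^k, w^k, p^k, x^k} be the sequences generated by Algorithm 1, let M₁ = ∂(g* ∘ (−I)) and M₂ = ∂f*, and let J₁, J₂ : ℝⁿ → ℝⁿ be resolvent functions of σM₁ and σM₂, i.e. x − Jᵢ(x) ∈ σMᵢ(Jᵢ(x)) for every x ∈ ℝⁿ (i = 1,2). Then for every k ≥ 0 one has w^{k+1} = J₂(η^k) and η^{k+1} = (2J₁ − I)((2J₂ − I)(η^k)); consequently the sequence {η^k} produced by Algorithm 1 coincides with the Peaceman–Rachford fixed-point iteration η^{k+1} = R_{σM₁}R_{σM₂}(η^k) started from the same initial point η⁰. -/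
noncomputable section

open Matrix Filter
open scoped Pointwise

/-- `ℝⁿ` with the Euclidean inner product and norm. -/
abbrev Vec (n : ℕ) := EuclideanSpace ℝ (Fin n)

/-- Matrix–vector multiplication viewed as a map between Euclidean spaces. -/
def mulVecE {m n : ℕ} (A : Matrix (Fin m) (Fin n) ℝ) (x : Vec n) : Vec m :=
  (EuclideanSpace.equiv (Fin m) ℝ).symm (A.mulVec (EuclideanSpace.equiv (Fin n) ℝ x))

/-- Subdifferential of an `ℝ ∪ {+∞}`-valued (coded as `EReal`-valued) function:
`∂h(x) = {u : ∀ z, h z ≥ h x + ⟨u, z − x⟩}`. -/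
def subdiffE {n : ℕ} (f : Vec n → EReal) (x : Vec n) : Set (Vec n) :=
  {u | ∀ z, f x + ((inner ℝ u (z - x) : ℝ) : EReal) ≤ f z}

/-- Fenchel conjugate `h*(w) = sup_z (⟨w, z⟩ − h z)`. -/
def fenchelE {n : ℕ} (f : Vec n → EReal) (w : Vec n) : EReal :=
  ⨆ z, ((inner ℝ w z : ℝ) : EReal) - f z

/-- Proper: never `−∞` (it takes values in `ℝ ∪ {+∞}`) and not identically `+∞`. -/
def ProperE {n : ℕ} (f : Vec n → EReal) : Prop :=
  (∀ x, f x ≠ ⊥) ∧ ∃ x, f x ≠ ⊤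

/-- Convexity for `EReal`-valued functions. -/
def ConvexE {n : ℕ} (f : Vec n → EReal) : Prop :=
  ∀ x y : Vec n, ∀ a b : ℝ, 0 ≤ a → 0 ≤ b → a + b = 1 →
    f (a • x + b • y) ≤ (a : EReal) * f x + (b : EReal) * f y

/-- `p` is a proximal point of `h` with parameter `s` at `x`, i.e. a minimizer of
`z ↦ h z + (1/(2 s)) ‖z − x‖²`; for proper convex lsc `h` it is the unique such point,
so this characterizes `p = Prox_{s h}(x)`. -/
def IsProxPt {n : ℕ} (h : Vec n → EReal) (s : ℝ) (p x : Vec n) : Prop :=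
  ∀ z, h p + ((1 / (2 * s) * ‖p - x‖ ^ 2 : ℝ) : EReal)
      ≤ h z + ((1 / (2 * s) * ‖z - x‖ ^ 2 : ℝ) : EReal)

/-!
Write `w = w^{k+1}`, `q = q^{k+1}`, etc. The `q`-update is the normal equation
`η^k - σ q = Aᵀ (A q - y)`, so `w = ∇f(q) ∈ ∂f(q)`; by the Fenchel–Young equality this turns into
`q ∈ ∂f*(w)`, and `η^k = w + σ q` then says `w = J₂(η^k)`. The optimality condition of the prox
step gives `-x ∈ ∂g(p)`, i.e. `-p ∈ ∂(g* ∘ (-I))(x)`, and `2w - η^k = x - σ p` says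
`x = J₁(2 J₂(η^k) - η^k)`. Both identifications hold for every resolvent, because the
subdifferential is monotone and so the resolvent of `σ∂φ` is single-valued. The `η`-update is
then `η^{k+1} = 2x - (2w - η^k)`, one Peaceman–Rachford step.
-/

open Topology

section Subdifferential

variable {n : ℕ} {h : Vec n → EReal}

lemma inner_sub_le_fenchelE (u z : Vec n) :
    ((inner ℝ u z : ℝ) : EReal) - h z ≤ fenchelE h u :=
  le_iSup (fun z => ((inner ℝ u z : ℝ) : EReal) - h z) z

lemma fenchelE_ne_bot {z : Vec n} (hz : h z ≠ ⊤) (u : Vec n) : fenchelE h u ≠ ⊥ := by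
  refine ne_bot_of_le_ne_bot ?_ (inner_sub_le_fenchelE u z)
  generalize h z = a at *
  induction a using EReal.rec <;> simp_all [← EReal.coe_sub]

lemma fenchelE_eq_of_mem_subdiffE {p u : Vec n} (hu : u ∈ subdiffE h p) :
    fenchelE h u = ((inner ℝ u p : ℝ) : EReal) - h p := by
  refine le_antisymm (iSup_le fun z => ?_) (inner_sub_le_fenchelE u p)
  have hz := hu z
  rw [inner_sub_right] at hz
  generalize h p = a at *
  generalize h z = b at *
  induction a using EReal.rec <;> induction b using EReal.rec <;> simp_all [← EReal.coe_sub]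
  norm_cast at hz
  linarith

lemma mem_subdiffE_fenchelE {p u : Vec n} (hu : u ∈ subdiffE h p) :
    p ∈ subdiffE (fenchelE h) u := by
  intro v
  rw [fenchelE_eq_of_mem_subdiffE hu]
  calc _ = ((inner ℝ v p : ℝ) : EReal) - h p := by
          rw [inner_sub_right, real_inner_comm p v, real_inner_comm p u]
          generalize h p = a
          induction a using EReal.rec <;> simp [← EReal.coe_sub, ← EReal.coe_add]
    _ ≤ fenchelE h v := inner_sub_le_fenchelE v p

lemma fenchelE_neg (v : Vec n) : fenchelE h (-v) = fenchelE (fun z => h (-z)) v := by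
  rw [fenchelE, ← (Equiv.neg (Vec n)).iSup_comp]
  simp [fenchelE, inner_neg_left, inner_neg_right]

lemma neg_mem_subdiffE_comp_neg {p u : Vec n} (hu : u ∈ subdiffE h p) :
    -u ∈ subdiffE (fun z => h (-z)) (-p) := by
  intro z
  have hz := hu (-z)
  rw [show -z - p = -(z - -p) by abel, inner_neg_right, ← inner_neg_left] at hz
  simpa using hz

lemma inner_sub_nonneg_of_mem_subdiffE {a b u v : Vec n} (ha : h a ≠ ⊤) (ha' : h a ≠ ⊥)
    (hu : u ∈ subdiffE h a) (hv : v ∈ subdiffE h b) : 0 ≤ inner ℝ (u - v) (a - b) := by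
  have hab := hu b
  have hba := hv a
  lift h a to ℝ using ⟨ha, ha'⟩ with c
  have hb : h b ≠ ⊤ := fun hb => by simp [hb] at hba
  have hb' : h b ≠ ⊥ := fun hb => by simp [hb] at hab
  lift h b to ℝ using ⟨hb, hb'⟩ with d
  norm_cast at hab hba
  rw [inner_sub_left, ← neg_sub b a, inner_neg_right, inner_neg_right] at *
  linarith

lemma eq_of_sub_mem_smul_subdiffE {σ : ℝ} (hσ : 0 < σ) {u a b : Vec n} (ha : h a ≠ ⊤)
    (ha' : h a ≠ ⊥) (hua : u - a ∈ σ • subdiffE h a) (hub : u - b ∈ σ • subdiffE h b) :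
    a = b := by
  obtain ⟨v, hv, hva⟩ := hua
  obtain ⟨v', hv', hvb⟩ := hub
  have hmono := inner_sub_nonneg_of_mem_subdiffE ha ha' hv hv'
  have hdiff : σ • (v - v') = -(a - b) := by
    simp only at hva hvb
    rw [smul_sub, hva, hvb]
    abel
  have hsq : σ * inner ℝ (v - v') (a - b) = -‖a - b‖ ^ 2 := by
    rw [← real_inner_smul_left, hdiff, inner_neg_left, real_inner_self_eq_norm_sq]
  have : ‖a - b‖ = 0 := by nlinarith [norm_nonneg (a - b)]
  exact sub_eq_zero.mp (norm_eq_zero.mp this)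

lemma resolvent_fenchelE_apply {σ : ℝ} (hσ : 0 < σ) {J : Vec n → Vec n}
    (hJ : ∀ v, v - J v ∈ σ • subdiffE (fenchelE h) (J v)) {p u : Vec n}
    (hu : u ∈ subdiffE h p) (hp : h p ≠ ⊤) (hp' : h p ≠ ⊥) : J (u + σ • p) = u := by
  refine (eq_of_sub_mem_smul_subdiffE hσ ?_ (fenchelE_ne_bot hp u) ?_ (hJ _)).symm
  · rw [fenchelE_eq_of_mem_subdiffE hu]
    generalize h p = a at *
    induction a using EReal.rec <;> simp_all [← EReal.coe_sub]
  · rw [add_sub_cancel_left]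
    exact Set.smul_mem_smul_set (mem_subdiffE_fenchelE hu)

end Subdifferential

lemma le_of_forall_mem_Ioc_le_add_mul {a d C : ℝ}
    (h : ∀ t ∈ Set.Ioc (0 : ℝ) 1, a ≤ d + t * C) : a ≤ d := by
  have hlim : Tendsto (fun t : ℝ => d + t * C) (𝓝[>] 0) (𝓝 d) := by
    have : Continuous fun t : ℝ => d + t * C := by fun_prop
    simpa using (this.tendsto 0).mono_left nhdsWithin_le_nhds
  exact ge_of_tendsto hlim (eventually_of_mem (Ioc_mem_nhdsGT zero_lt_one) h)

section Prox

variable {n : ℕ} {h : Vec n → EReal} {s : ℝ} {p x : Vec n}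

lemma IsProxPt.ne_top (hh : ProperE h) (hprox : IsProxPt h s p x) : h p ≠ ⊤ := by
  obtain ⟨hbot, z, hz⟩ := hh
  intro htop
  have hmin := hprox z
  rw [htop, EReal.top_add_of_ne_bot (EReal.coe_ne_bot _), top_le_iff] at hmin
  lift h z to ℝ using ⟨hz, hbot z⟩ with c
  exact EReal.coe_ne_top _ (by exact_mod_cast hmin)

lemma IsProxPt.inv_smul_sub_mem_subdiffE (hh : ProperE h) (hconv : ConvexE h)
    (hprox : IsProxPt h s p x) : s⁻¹ • (x - p) ∈ subdiffE h p := by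
  obtain ⟨c, hc⟩ : ∃ c : ℝ, h p = c := ⟨_, (EReal.coe_toReal (hprox.ne_top hh) (hh.1 p)).symm⟩
  intro z
  rcases eq_or_ne (h z) ⊤ with hz | hz
  · rw [hz]
    exact le_top
  obtain ⟨d, hd⟩ : ∃ d : ℝ, h z = d := ⟨_, (EReal.coe_toReal hz (hh.1 z)).symm⟩
  rw [hc, hd, ← EReal.coe_add, EReal.coe_le_coe_iff, real_inner_smul_left,
    ← neg_sub p x, inner_neg_left]
  refine le_of_forall_mem_Ioc_le_add_mul (C := ‖z - p‖ ^ 2 / (2 * s)) fun t ⟨ht0, ht1⟩ => ?_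
  -- compare `p` with the points `p + t (z - p)` of the segment towards `z`, then let `t → 0`
  have hconvt := hconv p z (1 - t) t (by linarith) ht0.le (by ring)
  rw [show (1 - t) • p + t • z = p + t • (z - p) by module, hc, hd] at hconvt
  obtain ⟨e, he⟩ : ∃ e : ℝ, h (p + t • (z - p)) = e :=
    ⟨_, (EReal.coe_toReal (ne_top_of_le_ne_top (by exact_mod_cast EReal.coe_ne_top _) hconvt)
      (hh.1 _)).symm⟩
  rw [he] at hconvt
  norm_cast at hconvt
  have hmin := hprox (p + t • (z - p))
  rw [hc, he, ← EReal.coe_add, ← EReal.coe_add, EReal.coe_le_coe_iff,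
    show p + t • (z - p) - x = (p - x) + t • (z - p) by abel, norm_add_sq_real,
    real_inner_smul_right, norm_smul, Real.norm_of_nonneg ht0.le] at hmin
  refine le_of_mul_le_mul_left ?_ ht0
  linear_combination hmin + hconvt

end Prox

section LeastSquares

variable {m n : ℕ} (A : Matrix (Fin m) (Fin n) ℝ)

lemma mulVecE_eq_toEuclideanLin (v : Vec n) : mulVecE A v = A.toEuclideanLin v := rfl

lemma inner_mulVecE_transpose (u : Vec m) (v : Vec n) :
    inner ℝ (mulVecE Aᵀ u) v = inner ℝ u (mulVecE A v) := by
  rw [mulVecE_eq_toEuclideanLin, mulVecE_eq_toEuclideanLin,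
    ← Matrix.conjTranspose_eq_transpose_of_trivial, Matrix.toEuclideanLin_conjTranspose_eq_adjoint,
    LinearMap.adjoint_inner_left]

lemma mulVecE_transpose_mem_subdiffE_half_sq_norm (y : Vec m) (q : Vec n) :
    mulVecE Aᵀ (mulVecE A q - y) ∈
      subdiffE (fun v => ((1 / 2 * ‖y - mulVecE A v‖ ^ 2 : ℝ) : EReal)) q := by
  intro z
  have hres : y - mulVecE A z = (y - mulVecE A q) - mulVecE A (z - q) := by
    simp only [mulVecE_eq_toEuclideanLin, map_sub]
    abel
  rw [← EReal.coe_add, EReal.coe_le_coe_iff, inner_mulVecE_transpose, hres,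
    norm_sub_sq_real (y - mulVecE A q), ← neg_sub y, inner_neg_left]
  nlinarith [sq_nonneg ‖mulVecE A (z - q)‖]

lemma sub_smul_eq_mulVecE_transpose_of_eq_mulVecE_inv {σ : ℝ} (hσ : 0 < σ) {y : Vec m}
    {η q : Vec n} (hq : q = mulVecE (Aᵀ * A + σ • 1)⁻¹ (mulVecE Aᵀ y + η)) :
    η - σ • q = mulVecE Aᵀ (mulVecE A q - y) := by
  have hB : (Aᵀ * A + σ • 1).PosDef := by
    rw [add_comm]
    refine (Matrix.PosDef.one.smul hσ).add_posSemidef ?_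
    simpa using Matrix.posSemidef_conjTranspose_mul_self A
  have hnormal : mulVecE (Aᵀ * A + σ • 1) q = mulVecE Aᵀ y + η := by
    rw [hq, mulVecE_eq_toEuclideanLin, mulVecE_eq_toEuclideanLin, ← LinearMap.comp_apply,
      ← Matrix.toLpLin_mul_same, Matrix.mul_nonsing_inv _ ((Matrix.isUnit_iff_isUnit_det _).mp
        hB.isUnit), Matrix.toLpLin_one, LinearMap.id_apply]
  simp only [mulVecE_eq_toEuclideanLin, Matrix.toLpLin_mul_same, map_add, map_smul,
    Matrix.toLpLin_one, LinearMap.add_apply, LinearMap.smul_apply, LinearMap.comp_apply,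
    LinearMap.id_apply, map_sub] at hnormal ⊢
  linear_combination (norm := module) -hnormal

end LeastSquares

lemma algorithm1_step_eq_resolvents {m n : ℕ} (A : Matrix (Fin m) (Fin n) ℝ) (y : Vec m)
    {σ : ℝ} (hσ : 0 < σ) {g : Vec n → EReal} (hg_proper : ProperE g) (hg_convex : ConvexE g)
    {J₁ J₂ : Vec n → Vec n}
    (hJ₁ : ∀ u, u - J₁ u ∈ σ • subdiffE (fun v => fenchelE g (-v)) (J₁ u))
    (hJ₂ : ∀ u, u - J₂ u ∈
      σ • subdiffE (fenchelE fun v => ((1 / 2 * ‖y - mulVecE A v‖ ^ 2 : ℝ) : EReal)) (J₂ u))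
    {η q w p x : Vec n} (hq : q = mulVecE (Aᵀ * A + σ • 1)⁻¹ (mulVecE Aᵀ y + η))
    (hw : w = η - σ • q) (hp : IsProxPt g σ⁻¹ p (σ⁻¹ • ((2 * σ) • q - η)))
    (hx : x = η + σ • p - (2 * σ) • q) :
    J₂ η = w ∧ J₁ (2 • J₂ η - η) = x := by
  have hJ₂η : J₂ η = w := by
    have hgrad : w = mulVecE Aᵀ (mulVecE A q - y) :=
      hw.trans (sub_smul_eq_mulVecE_transpose_of_eq_mulVecE_inv A hσ hq)
    rw [show η = w + σ • q by rw [hw, sub_add_cancel], hgrad]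
    exact resolvent_fenchelE_apply hσ hJ₂ (mulVecE_transpose_mem_subdiffE_half_sq_norm A y q)
      (EReal.coe_ne_top _) (EReal.coe_ne_bot _)
  refine ⟨hJ₂η, ?_⟩
  have hsub : -x ∈ subdiffE g p := by
    have := hp.inv_smul_sub_mem_subdiffE hg_proper hg_convex
    rwa [inv_inv, show σ • (σ⁻¹ • ((2 * σ) • q - η) - p) = -x by
      rw [hx, smul_sub, smul_smul, mul_inv_cancel₀ hσ.ne', one_smul]; module] at this
  simp_rw [fenchelE_neg] at hJ₁
  have := resolvent_fenchelE_apply hσ hJ₁ (neg_mem_subdiffE_comp_neg hsub)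
    (by simpa using hp.ne_top hg_proper) (by simpa using hg_proper.1 p)
  rwa [neg_neg, show x + σ • -p = 2 • w - η by rw [hx, hw]; module, ← hJ₂η] at this

theorem stmt0_general {m n : ℕ}
    (A : Matrix (Fin m) (Fin n) ℝ) (y : Vec m) (σ : ℝ) (hσ : 0 < σ)
    (g : Vec n → EReal) (hg_proper : ProperE g) (hg_convex : ConvexE g)
    (f : Vec n → ℝ) (hf : ∀ v, f v = (1 / 2) * ‖y - mulVecE A v‖ ^ 2)
    (η q w p x : ℕ → Vec n)
    (hq : ∀ k, q (k + 1) = mulVecE (Aᵀ * A + σ • 1)⁻¹ (mulVecE Aᵀ y + η k))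
    (hw : ∀ k, w (k + 1) = η k - σ • q (k + 1))
    (hp : ∀ k, IsProxPt g σ⁻¹ (p (k + 1)) (σ⁻¹ • ((2 * σ) • q (k + 1) - η k)))
    (hx : ∀ k, x (k + 1) = η k + σ • p (k + 1) - (2 * σ) • q (k + 1))
    (hη : ∀ k, η (k + 1) = η k + (2 * σ) • (p (k + 1) - q (k + 1)))
    (M₁ M₂ : Vec n → Set (Vec n))
    (hM₁ : M₁ = subdiffE (fun v => fenchelE g (-v)))
    (hM₂ : M₂ = subdiffE (fenchelE (fun v => ((f v : ℝ) : EReal))))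
    (J₁ J₂ : Vec n → Vec n)
    (hJ₁ : ∀ u, u - J₁ u ∈ σ • M₁ (J₁ u))
    (hJ₂ : ∀ u, u - J₂ u ∈ σ • M₂ (J₂ u)) :
    (∀ k, w (k + 1) = J₂ (η k) ∧
        η (k + 1) = 2 • J₁ (2 • J₂ (η k) - η k) - (2 • J₂ (η k) - η k)) ∧
    (∀ ζ : ℕ → Vec n, ζ 0 = η 0 →
        (∀ k, ζ (k + 1) = 2 • J₁ (2 • J₂ (ζ k) - ζ k) - (2 • J₂ (ζ k) - ζ k)) →
        ∀ k, ζ k = η k) := by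
  obtain rfl : f = fun v => 1 / 2 * ‖y - mulVecE A v‖ ^ 2 := funext hf
  subst hM₁ hM₂
  have step k := algorithm1_step_eq_resolvents A y hσ hg_proper hg_convex hJ₁ hJ₂
    (hq k) (hw k) (hp k) (hx k)
  have hPR : ∀ k, η (k + 1) = 2 • J₁ (2 • J₂ (η k) - η k) - (2 • J₂ (η k) - η k) := by
    intro k
    rw [(step k).2, (step k).1, hη k, hx k, hw k]
    module
  refine ⟨fun k => ⟨(step k).1.symm, hPR k⟩, fun ζ h0 hζ k => ?_⟩
  induction k with
  | zero => exact h0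
  | succ k ih => rw [hζ k, ih, hPR k]

/-- Along Algorithm 1 one has `w^{k+1} = J₂(η^k)` and
`η^{k+1} = (2J₁ − I)((2J₂ − I)(η^k))`, where `J₁, J₂` are resolvents of
`σM₁ = σ∂(g* ∘ (−I))` and `σM₂ = σ∂f*`; consequently the sequence `{η^k}` coincides with
the Peaceman–Rachford fixed-point iteration started from the same initial point. -/
theorem stmt0 {m n : ℕ}
    (A : Matrix (Fin m) (Fin n) ℝ) (y : Vec m) (σ : ℝ) (hσ : 0 < σ)
    (g : Vec n → EReal) (hg_proper : ProperE g) (hg_convex : ConvexE g)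
    (hg_lsc : LowerSemicontinuous g)
    (f : Vec n → ℝ) (hf : ∀ v, f v = (1 / 2) * ‖y - mulVecE A v‖ ^ 2)
    (η q w p x : ℕ → Vec n)
    (hq : ∀ k, q (k + 1) = mulVecE (Aᵀ * A + σ • 1)⁻¹ (mulVecE Aᵀ y + η k))
    (hw : ∀ k, w (k + 1) = η k - σ • q (k + 1))
    (hp : ∀ k, IsProxPt g σ⁻¹ (p (k + 1)) (σ⁻¹ • ((2 * σ) • q (k + 1) - η k)))
    (hx : ∀ k, x (k + 1) = η k + σ • p (k + 1) - (2 * σ) • q (k + 1))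
    (hη : ∀ k, η (k + 1) = η k + (2 * σ) • (p (k + 1) - q (k + 1)))
    (M₁ M₂ : Vec n → Set (Vec n))
    (hM₁ : M₁ = subdiffE (fun v => fenchelE g (-v)))
    (hM₂ : M₂ = subdiffE (fenchelE (fun v => ((f v : ℝ) : EReal))))
    (J₁ J₂ : Vec n → Vec n)
    (hJ₁ : ∀ u, u - J₁ u ∈ σ • M₁ (J₁ u))
    (hJ₂ : ∀ u, u - J₂ u ∈ σ • M₂ (J₂ u)) :
    (∀ k, w (k + 1) = J₂ (η k) ∧
        η (k + 1) = 2 • J₁ (2 • J₂ (η k) - η k) - (2 • J₂ (η k) - η k)) ∧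
    (∀ ζ : ℕ → Vec n, ζ 0 = η 0 →
        (∀ k, ζ (k + 1) = 2 • J₁ (2 • J₂ (ζ k) - ζ k) - (2 • J₂ (ζ k) - ζ k)) →
        ∀ k, ζ k = η k) :=
  stmt0_general A y σ hσ g hg_proper hg_convex f hf η q w p x hq hw hp hx hη M₁ M₂ hM₁ hM₂ J₁ J₂ hJ₁
    hJ₂
end
end

section
/- Let H be a real Hilbert space, let F : H → H be β-Lipschitz with 0 ≤ β < 1 and fixed point η* = F(η*), and let T : H → H satisfy the relative approximation bound ‖T(x) − F(x)‖ ≤ ρ‖x‖ for all x ∈ H, where ρ ≥ 0 and β + ρ < 1. Then the iterates η^{k+1} = T(η^k) satisfy, for every k ≥ 0, ‖η^k − η*‖ ≤ (β + ρ)^k ‖η⁰ − η*‖ + ρ‖η*‖/(1 − β − ρ); in particular the iterates converge at a linear rate to the ball of radius ρ‖η*‖/(1 − β − ρ) around η*. -/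
/-!
Since `T` is a `ρ`-relative perturbation of the `β`-contraction `F`, one step of `T` brings an
iterate closer to the fixed point `η*` of `F` like a `(β + ρ)`-contraction, up to the additive
error `ρ‖η*‖` coming from `‖x‖ ≤ ‖x - η*‖ + ‖η*‖`. Unrolling the scalar recursion
`e (k + 1) ≤ q e k + c` gives `e k ≤ q ^ k e 0 + c / (1 - q)`, because `c / (1 - q)` is the fixed
point of `t ↦ q t + c`.
-/

theorem le_pow_mul_add_div_one_sub_of_le_mul_add {e : ℕ → ℝ} {q c : ℝ} (hq0 : 0 ≤ q)
    (hq1 : q < 1) (hc0 : 0 ≤ c) (he : ∀ k, e (k + 1) ≤ q * e k + c) (k : ℕ) :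
    e k ≤ q ^ k * e 0 + c / (1 - q) := by
  have hq : 0 < 1 - q := sub_pos.2 hq1
  have hfix : q * (c / (1 - q)) + c = c / (1 - q) := by
    field_simp
    ring
  induction k with
  | zero =>
    rw [pow_zero, one_mul]
    exact le_add_of_nonneg_right (by positivity)
  | succ k ih =>
    calc e (k + 1) ≤ q * e k + c := he k
      _ ≤ q * (q ^ k * e 0 + c / (1 - q)) + c := by gcongr
      _ = q ^ (k + 1) * e 0 + c / (1 - q) := by rw [mul_add, add_assoc, hfix]; ring

theorem norm_sub_fixedPoint_le_of_relative_perturbation {E : Type*} [SeminormedAddCommGroup E]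
    {F T : E → E} {β ρ : ℝ} (hρ0 : 0 ≤ ρ) (hF : ∀ x y, ‖F x - F y‖ ≤ β * ‖x - y‖)
    (hT : ∀ x, ‖T x - F x‖ ≤ ρ * ‖x‖) {p : E} (hp : F p = p) (x : E) :
    ‖T x - p‖ ≤ (β + ρ) * ‖x - p‖ + ρ * ‖p‖ := by
  have hx : ‖x‖ ≤ ‖x - p‖ + ‖p‖ := norm_le_norm_sub_add x p
  calc ‖T x - p‖ ≤ ‖T x - F x‖ + ‖F x - F p‖ := by
        rw [hp]; exact norm_sub_le_norm_sub_add_norm_sub _ _ _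
    _ ≤ ρ * (‖x - p‖ + ‖p‖) + β * ‖x - p‖ :=
        add_le_add ((hT x).trans (by gcongr)) (hF x p)
    _ = (β + ρ) * ‖x - p‖ + ρ * ‖p‖ := by ring

theorem stmt3_general {H : Type*} [NormedAddCommGroup H]
    (F T : H → H) (β ρ : ℝ) (hβ0 : 0 ≤ β) (hρ0 : 0 ≤ ρ) (hβρ : β + ρ < 1)
    (hF : ∀ x y : H, ‖F x - F y‖ ≤ β * ‖x - y‖)
    (ηstar : H) (hfix : ηstar = F ηstar)
    (hT : ∀ x : H, ‖T x - F x‖ ≤ ρ * ‖x‖)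
    (η : ℕ → H) (hiter : ∀ k, η (k + 1) = T (η k)) :
    ∀ k : ℕ, ‖η k - ηstar‖ ≤ (β + ρ) ^ k * ‖η 0 - ηstar‖ + ρ * ‖ηstar‖ / (1 - β - ρ) := by
  have step : ∀ k, ‖η (k + 1) - ηstar‖ ≤ (β + ρ) * ‖η k - ηstar‖ + ρ * ‖ηstar‖ := fun k => by
    rw [hiter k]
    exact norm_sub_fixedPoint_le_of_relative_perturbation hρ0 hF hT hfix.symm (η k)
  intro k
  rw [sub_sub]
  exact le_pow_mul_add_div_one_sub_of_le_mul_add (e := fun k => ‖η k - ηstar‖)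
    (add_nonneg hβ0 hρ0) hβρ (mul_nonneg hρ0 (norm_nonneg ηstar)) step k

/-- Let `F` be `β`-Lipschitz on a real Hilbert space with `0 ≤ β < 1` and fixed
point `η*`, and let `T` satisfy the relative approximation bound `‖T x − F x‖ ≤ ρ‖x‖` with
`ρ ≥ 0` and `β + ρ < 1`. Then the iterates `η^{k+1} = T(η^k)` satisfy
`‖η^k − η*‖ ≤ (β + ρ)^k ‖η⁰ − η*‖ + ρ‖η*‖/(1 − β − ρ)` for every `k ≥ 0`. -/
theorem stmt3 {H : Type*} [NormedAddCommGroup H] [InnerProductSpace ℝ H]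
    (F T : H → H) (β ρ : ℝ) (hβ0 : 0 ≤ β) (hβ1 : β < 1) (hρ0 : 0 ≤ ρ) (hβρ : β + ρ < 1)
    (hF : ∀ x y : H, ‖F x - F y‖ ≤ β * ‖x - y‖)
    (ηstar : H) (hfix : ηstar = F ηstar)
    (hT : ∀ x : H, ‖T x - F x‖ ≤ ρ * ‖x‖)
    (η : ℕ → H) (hiter : ∀ k, η (k + 1) = T (η k)) :
    ∀ k : ℕ, ‖η k - ηstar‖ ≤ (β + ρ) ^ k * ‖η 0 - ηstar‖ + ρ * ‖ηstar‖ / (1 - β - ρ) :=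
  stmt3_general F T β ρ hβ0 hρ0 hβρ hF ηstar hfix hT η hiter
end

section
/- Let H be a real Hilbert space, let L₁, L₂, L₃ : H → H each be α-Lipschitz, let P, R : H → H satisfy ‖R(x) − P(x)‖ ≤ ε for all x ∈ H, and set F = L₃ ∘ L₂ ∘ P ∘ L₁ and T = L₃ ∘ L₂ ∘ R ∘ L₁. Assume F is β-Lipschitz with 0 ≤ β < 1. If η* is a fixed point of F and η_R is a fixed point of T, then ‖η_R − η*‖ ≤ α²ε/(1 − β). -/
/-!
The maps `F` and `T` differ only in the inner step, so `dist (F x) (T x) ≤ α²ε` uniformly: the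
error of `R` is propagated by `L₂` and `L₃` alone (with constant `|α|` each, which also covers
`α < 0`). A uniform perturbation of a `β`-contraction moves a fixed point by at most this
amount divided by `1 - β`.
-/

open NNReal

lemma lipschitzWith_nnabs_of_norm_sub_le {E F : Type*} [SeminormedAddCommGroup E]
    [SeminormedAddCommGroup F] {f : E → F} {α : ℝ} (h : ∀ x y, ‖f x - f y‖ ≤ α * ‖x - y‖) :
    LipschitzWith (Real.nnabs α) f :=
  LipschitzWith.of_dist_le_mul fun x y => by
    rw [dist_eq_norm, dist_eq_norm, Real.coe_nnabs]
    exact (h x y).trans (mul_le_mul_of_nonneg_right (le_abs_self α) (norm_nonneg _))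

lemma contractingWith_nnabs_of_norm_sub_le {E : Type*} [NormedAddCommGroup E] {f : E → E}
    {β : ℝ} (hβ0 : 0 ≤ β) (hβ1 : β < 1) (h : ∀ x y, ‖f x - f y‖ ≤ β * ‖x - y‖) :
    ContractingWith (Real.nnabs β) f :=
  ⟨by rwa [← NNReal.coe_lt_coe, Real.coe_nnabs, abs_of_nonneg hβ0, NNReal.coe_one],
    lipschitzWith_nnabs_of_norm_sub_le h⟩

theorem stmt6_general {H : Type*} [NormedAddCommGroup H]
    (L₁ L₂ L₃ P R : H → H) (α ε β : ℝ)
    (hL₂ : ∀ x y : H, ‖L₂ x - L₂ y‖ ≤ α * ‖x - y‖)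
    (hL₃ : ∀ x y : H, ‖L₃ x - L₃ y‖ ≤ α * ‖x - y‖)
    (hPR : ∀ x : H, ‖R x - P x‖ ≤ ε)
    (F T : H → H) (hFdef : F = L₃ ∘ L₂ ∘ P ∘ L₁) (hTdef : T = L₃ ∘ L₂ ∘ R ∘ L₁)
    (hβ0 : 0 ≤ β) (hβ1 : β < 1)
    (hF : ∀ x y : H, ‖F x - F y‖ ≤ β * ‖x - y‖)
    (ηstar : H) (hstar : F ηstar = ηstar)
    (ηR : H) (hR : T ηR = ηR) :
    ‖ηR - ηstar‖ ≤ α ^ 2 * ε / (1 - β) := by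
  have hL : LipschitzWith (Real.nnabs α * Real.nnabs α) (L₃ ∘ L₂) :=
    (lipschitzWith_nnabs_of_norm_sub_le hL₃).comp (lipschitzWith_nnabs_of_norm_sub_le hL₂)
  have hFT : ∀ x, dist (F x) (T x) ≤ α ^ 2 * ε := fun x => by
    have hRP : dist (R (L₁ x)) (P (L₁ x)) ≤ ε := (dist_eq_norm _ _).trans_le (hPR _)
    rw [dist_comm, hFdef, hTdef]
    simpa only [Function.comp_apply, ← sq, coe_pow, Real.coe_nnabs, sq_abs] using
      hL.dist_le_mul_of_le hRP
  have hdist := (contractingWith_nnabs_of_norm_sub_le hβ0 hβ1 hF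
    ).dist_fixedPoint_fixedPoint_of_dist_le' T hstar hR hFT
  rwa [Real.coe_nnabs, abs_of_nonneg hβ0, dist_comm, dist_eq_norm] at hdist

/-- Let `L₁, L₂, L₃` be `α`-Lipschitz maps of a real Hilbert space, let `P, R`
satisfy `‖R x − P x‖ ≤ ε` for all `x`, and set `F = L₃ ∘ L₂ ∘ P ∘ L₁`,
`T = L₃ ∘ L₂ ∘ R ∘ L₁`. If `F` is `β`-Lipschitz with `0 ≤ β < 1`, `η*` is a fixed point of `F`
and `η_R` is a fixed point of `T`, then `‖η_R − η*‖ ≤ α²ε/(1 − β)`. -/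
theorem stmt6 {H : Type*} [NormedAddCommGroup H] [InnerProductSpace ℝ H]
    (L₁ L₂ L₃ P R : H → H) (α ε β : ℝ)
    (hL₁ : ∀ x y : H, ‖L₁ x - L₁ y‖ ≤ α * ‖x - y‖)
    (hL₂ : ∀ x y : H, ‖L₂ x - L₂ y‖ ≤ α * ‖x - y‖)
    (hL₃ : ∀ x y : H, ‖L₃ x - L₃ y‖ ≤ α * ‖x - y‖)
    (hPR : ∀ x : H, ‖R x - P x‖ ≤ ε)
    (F T : H → H) (hFdef : F = L₃ ∘ L₂ ∘ P ∘ L₁) (hTdef : T = L₃ ∘ L₂ ∘ R ∘ L₁)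
    (hβ0 : 0 ≤ β) (hβ1 : β < 1)
    (hF : ∀ x y : H, ‖F x - F y‖ ≤ β * ‖x - y‖)
    (ηstar : H) (hstar : F ηstar = ηstar)
    (ηR : H) (hR : T ηR = ηR) :
    ‖ηR - ηstar‖ ≤ α ^ 2 * ε / (1 - β) :=
  stmt6_general L₁ L₂ L₃ P R α ε β hL₂ hL₃ hPR F T hFdef hTdef hβ0 hβ1 hF ηstar hstar ηR hR
end
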